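/- Set d = ‖γ(l) − γ(0)‖, the Euclidean distance between the endpoints of γ. If moreover l ≤ 2d, then l ≤ d + 4d³/(3ρ²); equivalently, l ≤ (1 + 4d²/(3ρ²))·d. (This is the analytic content of the statement that if two points p, q on a manifold M of reach ρ satisfy ‖p−q‖ ≤ ρ/2, then their geodesic distance d_M(p,q) is at most (1 + 4‖p−q‖²/(3ρ²))·‖p−q‖, applied to a minimizing geodesic γ parameterized by arclength, whose curvature is bounded by 1/ρ and whose length l satisfies l ≤ 2‖p−q‖.) -/

import Mathlib

/-!
Fix the initial direction `u = γ' 0`. Since `γ'` is `κ`-Lipschitz and of unit length,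
`⟪u, γ' t⟫ = 1 - ‖γ' t - u‖² / 2 ≥ 1 - κ² t² / 2`; integrating (via monotonicity) gives
`‖γ l - γ 0‖ ≥ ⟪u, γ l - γ 0⟫ ≥ l - κ² l³ / 6`. With `κ = 1/ρ` and `l ≤ 2d` the cubic error
term is at most `8 d³ / (6 ρ²)`.
-/

open scoped RealInnerProductSpace

section

variable {E : Type*} [NormedAddCommGroup E] [InnerProductSpace ℝ E]

theorem one_sub_sq_div_two_le_inner_of_norm_sub_le {u v : E} (hu : ‖u‖ = 1) (hv : ‖v‖ = 1)
    {ε : ℝ} (h : ‖v - u‖ ≤ ε) : 1 - ε ^ 2 / 2 ≤ ⟪u, v⟫ := by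
  have hsq : ‖v - u‖ ^ 2 ≤ ε ^ 2 := pow_le_pow_left₀ (norm_nonneg _) h 2
  have hexpand := norm_sub_sq_real v u
  rw [hu, hv, real_inner_comm] at hexpand
  linarith

theorem sub_cube_le_norm_sub_of_norm_deriv2_le {γ γ' γ'' : ℝ → E} {κ l : ℝ} (hl : 0 ≤ l)
    (hγ' : ∀ t ∈ Set.Icc (0 : ℝ) l, HasDerivAt γ (γ' t) t)
    (hγ'' : ∀ t ∈ Set.Icc (0 : ℝ) l, HasDerivAt γ' (γ'' t) t)
    (hunit : ∀ t ∈ Set.Icc (0 : ℝ) l, ‖γ' t‖ = 1)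
    (hcurv : ∀ t ∈ Set.Icc (0 : ℝ) l, ‖γ'' t‖ ≤ κ) :
    l - κ ^ 2 * l ^ 3 / 6 ≤ ‖γ l - γ 0‖ := by
  have h0 : (0 : ℝ) ∈ Set.Icc 0 l := ⟨le_rfl, hl⟩
  have hlmem : l ∈ Set.Icc 0 l := ⟨hl, le_rfl⟩
  have hinner : ∀ t ∈ Set.Icc (0 : ℝ) l, 1 - (κ * t) ^ 2 / 2 ≤ ⟪γ' 0, γ' t⟫ := by
    intro t ht
    refine one_sub_sq_div_two_le_inner_of_norm_sub_le (hunit 0 h0) (hunit t ht) ?_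
    have := (convex_Icc (0 : ℝ) l).norm_image_sub_le_of_norm_hasDerivWithin_le
      (fun s hs => (hγ'' s hs).hasDerivWithinAt) hcurv h0 ht
    rwa [sub_zero, Real.norm_of_nonneg ht.1] at this
  set f : ℝ → ℝ := fun t => ⟪γ' 0, γ t⟫ - (t - κ ^ 2 * t ^ 3 / 6)
  have hf : ∀ t ∈ Set.Icc (0 : ℝ) l,
      HasDerivAt f (⟪γ' 0, γ' t⟫ - (1 - (κ * t) ^ 2 / 2)) t := by
    intro t ht
    have hpoly : HasDerivAt (fun t : ℝ => t - κ ^ 2 * t ^ 3 / 6) (1 - (κ * t) ^ 2 / 2) t := by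
      refine ((hasDerivAt_id' t).sub
        (((hasDerivAt_pow 3 t).const_mul (κ ^ 2)).div_const 6)).congr_deriv ?_
      push_cast
      ring
    have hinner_deriv := (hasDerivAt_const t (γ' 0)).inner ℝ (hγ' t ht)
    rw [inner_zero_left, add_zero] at hinner_deriv
    exact hinner_deriv.sub hpoly
  have hmono : MonotoneOn f (Set.Icc 0 l) :=
    monotoneOn_of_hasDerivWithinAt_nonneg (convex_Icc 0 l)
      (fun t ht => (hf t ht).continuousAt.continuousWithinAt)
      (fun t ht => (hf t (interior_subset ht)).hasDerivWithinAt)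
      (fun t ht => sub_nonneg.mpr (hinner t (interior_subset ht)))
  have hf_le : f 0 ≤ f l := hmono h0 hlmem hl
  calc l - κ ^ 2 * l ^ 3 / 6 ≤ ⟪γ' 0, γ l - γ 0⟫ := by
        simp only [f] at hf_le
        rw [inner_sub_right]
        linarith
    _ ≤ ‖γ' 0‖ * ‖γ l - γ 0‖ := real_inner_le_norm _ _
    _ = ‖γ l - γ 0‖ := by rw [hunit 0 h0, one_mul]

end

theorem geodesic_vs_euclidean_length_general
    {E : Type*} [NormedAddCommGroup E] [InnerProductSpace ℝ E]
    (ρ l : ℝ) (hl : 0 < l)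
    (γ γ' γ'' : ℝ → E)
    (hγ' : ∀ t ∈ Set.Icc (0 : ℝ) l, HasDerivAt γ (γ' t) t)
    (hγ'' : ∀ t ∈ Set.Icc (0 : ℝ) l, HasDerivAt γ' (γ'' t) t)
    (hunit : ∀ t ∈ Set.Icc (0 : ℝ) l, ‖γ' t‖ = 1)
    (hcurv : ∀ t ∈ Set.Icc (0 : ℝ) l, ‖γ'' t‖ ≤ 1 / ρ)
    (d : ℝ) (hd : d = ‖γ l - γ 0‖) (hld : l ≤ 2 * d) :
    l ≤ d + 4 * d ^ 3 / (3 * ρ ^ 2) := by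
  have hchord := sub_cube_le_norm_sub_of_norm_deriv2_le hl.le hγ' hγ'' hunit hcurv
  rw [← hd] at hchord
  have hcube : l ^ 3 ≤ (2 * d) ^ 3 := pow_le_pow_left₀ hl.le hld 3
  calc l ≤ d + (1 / ρ) ^ 2 * l ^ 3 / 6 := by linarith
    _ ≤ d + (1 / ρ) ^ 2 * (2 * d) ^ 3 / 6 := by gcongr
    _ = d + 4 * d ^ 3 / (3 * ρ ^ 2) := by ring

theorem geodesic_vs_euclidean_length
    {E : Type*} [NormedAddCommGroup E] [InnerProductSpace ℝ E]
    (ρ l : ℝ) (hρ : 0 < ρ) (hl : 0 < l)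
    (γ γ' γ'' : ℝ → E)
    (hγ' : ∀ t ∈ Set.Icc (0 : ℝ) l, HasDerivAt γ (γ' t) t)
    (hγ'' : ∀ t ∈ Set.Icc (0 : ℝ) l, HasDerivAt γ' (γ'' t) t)
    (hcont : ContinuousOn γ'' (Set.Icc (0 : ℝ) l))
    (hunit : ∀ t ∈ Set.Icc (0 : ℝ) l, ‖γ' t‖ = 1)
    (hcurv : ∀ t ∈ Set.Icc (0 : ℝ) l, ‖γ'' t‖ ≤ 1 / ρ)
    (d : ℝ) (hd : d = ‖γ l - γ 0‖) (hld : l ≤ 2 * d) :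
    l ≤ d + 4 * d ^ 3 / (3 * ρ ^ 2) :=
  geodesic_vs_euclidean_length_general ρ l hl γ γ' γ'' hγ' hγ'' hunit hcurv d hd hld
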